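/- arXiv:1908.05570 — 3 statements merged into one kernel-verified Lean document; each statement's English description precedes it below -/
import Mathlib

section
/- Let P_d(W) = 1/(λW) + ℓ/W − e^{-λ(W−ℓ)}/(λW) for W ≥ ℓ with λ > 0, ℓ > 0. Then P_d is strictly decreasing in W on [ℓ, ∞) and P_d(W) → 0 as W → ∞. -/
/-! Writing `c = 1 + λℓ`, the detection probability is `P_d(W) = (c - e^{-λ(W-ℓ)}) / (λW)`.
With `x = λ(W - ℓ) > 0` the sign of `P_d'(W)` is that of `e^{-x}(x + c) - c`, which is negative
because `c e^x > c (1 + x) ≥ c + x` when `c ≥ 1`. The numerator tends to `c`, the denominator to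
`∞`, so `P_d(W) → 0`. -/

open Filter Topology Real

lemma exp_neg_mul_add_lt {c x : ℝ} (hc : 1 ≤ c) (hx : 0 < x) : exp (-x) * (x + c) < c := by
  rw [exp_neg, inv_mul_lt_iff₀ (exp_pos x)]
  have hexp : x + 1 < exp x := add_one_lt_exp hx.ne'
  have hcx : x ≤ c * x := le_mul_of_one_le_left hx.le hc
  nlinarith

noncomputable def detectionProbability (lam ℓ W : ℝ) : ℝ :=
  (1 + lam * ℓ - exp (-lam * (W - ℓ))) / (lam * W)

section

variable {lam ℓ : ℝ}

lemma detectionProbability_eq (hlam : lam ≠ 0) :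
    detectionProbability lam ℓ =
      fun W => 1 / (lam * W) + ℓ / W - exp (-lam * (W - ℓ)) / (lam * W) := by
  funext W
  rcases eq_or_ne W 0 with rfl | hW
  · simp [detectionProbability]
  · simp only [detectionProbability]
    field_simp

lemma hasDerivAt_detectionProbability (hlam : lam ≠ 0) {W : ℝ} (hW : W ≠ 0) :
    HasDerivAt (detectionProbability lam ℓ)
      ((exp (-lam * (W - ℓ)) * (lam * W + 1) - (1 + lam * ℓ)) / (lam * W ^ 2)) W := by
  have hden : HasDerivAt (fun W => lam * W) lam W := by
    simpa using (hasDerivAt_id W).const_mul lam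
  have hexp : HasDerivAt (fun W => exp (-lam * (W - ℓ))) (exp (-lam * (W - ℓ)) * -lam) W := by
    simpa using (((hasDerivAt_id W).sub_const ℓ).const_mul (-lam)).exp
  refine ((hexp.const_sub (1 + lam * ℓ)).div hden (mul_ne_zero hlam hW)).congr_deriv ?_
  field_simp
  ring

lemma detectionProbability_strictAntiOn (hlam : 0 < lam) (hℓ : 0 < ℓ) :
    StrictAntiOn (detectionProbability lam ℓ) (Set.Ici ℓ) := by
  have hderiv (W : ℝ) (hW : ℓ ≤ W) := hasDerivAt_detectionProbability (ℓ := ℓ) hlam.ne'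
    (hℓ.trans_le hW).ne'
  refine strictAntiOn_of_deriv_neg (convex_Ici ℓ)
    (fun W hW => (hderiv W hW).continuousAt.continuousWithinAt) fun W hW => ?_
  rw [interior_Ici] at hW
  rw [(hderiv W hW.le).deriv]
  have hx : 0 < lam * (W - ℓ) := mul_pos hlam (sub_pos.mpr hW)
  have hkey := exp_neg_mul_add_lt (c := 1 + lam * ℓ) (by nlinarith) hx
  rw [show lam * (W - ℓ) + (1 + lam * ℓ) = lam * W + 1 by ring, ← neg_mul] at hkey
  have hW0 : 0 < W := hℓ.trans hW
  exact div_neg_of_neg_of_pos (by linarith) (by positivity)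

lemma tendsto_detectionProbability_atTop (hlam : 0 < lam) :
    Tendsto (detectionProbability lam ℓ) atTop (𝓝 0) := by
  have hexponent : Tendsto (fun W => -lam * (W - ℓ)) atTop atBot :=
    (tendsto_atTop_add_const_right atTop (-ℓ) tendsto_id).const_mul_atTop_of_neg
      (neg_neg_iff_pos.mpr hlam)
  have hexp : Tendsto (fun W => exp (-lam * (W - ℓ))) atTop (𝓝 0) :=
    tendsto_exp_atBot.comp hexponent
  exact (tendsto_const_nhds.sub hexp).div_atTop (tendsto_id.const_mul_atTop hlam)

end

/-- `P_d(W) = 1/(lam W) + ℓ/W − e^{−lam(W−ℓ)}/(lam W)` is strictly decreasing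
on `[ℓ, ∞)` and tends to `0` as `W → ∞`. -/
theorem detection_probability_strictAnti_and_tendsto_zero
    (lam ℓ : ℝ) (hlam : 0 < lam) (hℓ : 0 < ℓ) :
    StrictAntiOn
      (fun W : ℝ => 1 / (lam * W) + ℓ / W - Real.exp (-lam * (W - ℓ)) / (lam * W))
      (Set.Ici ℓ) ∧
    Tendsto
      (fun W : ℝ => 1 / (lam * W) + ℓ / W - Real.exp (-lam * (W - ℓ)) / (lam * W))
      atTop (nhds 0) := by
  rw [← detectionProbability_eq hlam.ne']
  exact ⟨detectionProbability_strictAntiOn hlam hℓ, tendsto_detectionProbability_atTop hlam⟩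
end

section
/- Define A_n = H_n − H_{r−n} − H_{n−k} for k ≤ n ≤ r−1 with fixed positive integers k < r. Let n* = √(k(r+1)) − 1. Then A is strictly decreasing on integers n < n* and strictly increasing on integers n > n*; hence A attains its minimum over {k, …, r−1} at ⌊n*⌋ or ⌈n*⌉ (restricted to that range). -/
/-- The `j`-th harmonicNum number `H_j = ∑_{i=1}^j 1/i` (with `H_0 = 0`). -/
noncomputable def harmonicNum (j : ℕ) : ℝ := ∑ i ∈ Finset.range j, (1 : ℝ) / (i + 1)

/-!
Telescoping the harmonic numbers gives
`A_{n+1} - A_n = 1/(n+1) + 1/(r-n) - 1/(n+1-k) = ((n+1)² - k(r+1)) / ((n+1)(r-n)(n+1-k))`,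
whose denominator is positive on `k ≤ n < r`. So `A` steps down exactly while `(n+1)² < k(r+1)`,
i.e. while `n < ⌈√(k(r+1)) - 1⌉₊`, and a sequence that steps down up to a threshold and up
after it is minimised, on an interval, at the threshold clamped to that interval.
-/

theorem apply_max_min_le_of_succ_lt_iff_lt {α : Type*} [LinearOrder α] {f : ℕ → α} {a b c : ℕ}
    (hf : ∀ j, a ≤ j → j < b → (f (j + 1) < f j ↔ j < c)) :
    ∀ n ∈ Finset.Icc a b, f (max a (min b c)) ≤ f n := by
  set m := max a (min b c) with hm
  have hanti : AntitoneOn f (Set.Icc a m) := by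
    refine antitoneOn_of_add_one_le Set.ordConnected_Icc fun j _ ⟨haj, _⟩ ⟨_, hjm⟩ => ?_
    exact ((hf j haj (by omega)).2 (by omega)).le
  have hmono : MonotoneOn f (Set.Icc m b) := by
    refine monotoneOn_of_le_add_one Set.ordConnected_Icc fun j _ ⟨hmj, _⟩ ⟨_, hjb⟩ => ?_
    exact not_lt.1 fun h => by have := (hf j (by omega) (by omega)).1 h; omega
  intro n hn
  rw [Finset.mem_Icc] at hn
  rcases le_total n m with h | h
  · exact hanti ⟨hn.1, h⟩ ⟨by omega, le_rfl⟩ h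
  · exact hmono ⟨le_rfl, by omega⟩ ⟨h, hn.2⟩ h

theorem natCast_lt_sqrt_sub_one_iff (n : ℕ) (x : ℝ) :
    (n : ℝ) < Real.sqrt x - 1 ↔ ((n : ℝ) + 1) ^ 2 < x := by
  rw [lt_sub_iff_add_lt, Real.lt_sqrt (by positivity)]

theorem sqrt_sub_one_lt_natCast_iff (n : ℕ) (x : ℝ) :
    Real.sqrt x - 1 < n ↔ x < ((n : ℝ) + 1) ^ 2 := by
  rw [sub_lt_iff_lt_add, Real.sqrt_lt' (by positivity)]

theorem harmonicNum_succ (j : ℕ) : harmonicNum (j + 1) = harmonicNum j + 1 / ((j : ℝ) + 1) := by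
  simp [harmonicNum, Finset.sum_range_succ]

noncomputable def harmonicGap (r k n : ℕ) : ℝ :=
  harmonicNum n - harmonicNum (r - n) - harmonicNum (n - k)

section harmonicGap

variable {r k n : ℕ}

theorem harmonicGap_succ_sub (hkn : k ≤ n) (hnr : n < r) :
    harmonicGap r k (n + 1) - harmonicGap r k n =
      (((n : ℝ) + 1) ^ 2 - k * (r + 1)) / (((n : ℝ) + 1) * (r - n) * (n + 1 - k)) := by
  have hk : (k : ℝ) ≤ n := by exact_mod_cast hkn
  have hn : (n : ℝ) + 1 ≤ r := by exact_mod_cast hnr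
  rw [harmonicGap, harmonicGap, show n + 1 - k = n - k + 1 by omega,
    show r - n = r - (n + 1) + 1 by omega]
  simp only [harmonicNum_succ]
  rw [Nat.cast_sub hkn, Nat.cast_sub hnr, Nat.cast_add_one,
    show (n : ℝ) - k + 1 = n + 1 - k by ring, show (r : ℝ) - (n + 1) + 1 = r - n by ring]
  have hrn : (r : ℝ) - n ≠ 0 := by linarith
  have hnk : (n : ℝ) + 1 - k ≠ 0 := by linarith
  field_simp
  ring

theorem harmonicGap_succ_sub_denom_pos (hkn : k ≤ n) (hnr : n < r) :
    0 < ((n : ℝ) + 1) * (r - n) * (n + 1 - k) := by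
  have hk : (k : ℝ) ≤ n := by exact_mod_cast hkn
  have hn : (n : ℝ) + 1 ≤ r := by exact_mod_cast hnr
  have : (0 : ℝ) < n + 1 := by positivity
  apply mul_pos (mul_pos _ _) <;> linarith

theorem harmonicGap_succ_lt_iff (hkn : k ≤ n) (hnr : n < r) :
    harmonicGap r k (n + 1) < harmonicGap r k n ↔ ((n : ℝ) + 1) ^ 2 < k * (r + 1) := by
  rw [← sub_neg, harmonicGap_succ_sub hkn hnr,
    div_lt_iff₀ (harmonicGap_succ_sub_denom_pos hkn hnr), zero_mul, sub_neg]

theorem harmonicGap_lt_succ_iff (hkn : k ≤ n) (hnr : n < r) :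
    harmonicGap r k n < harmonicGap r k (n + 1) ↔ (k : ℝ) * (r + 1) < ((n : ℝ) + 1) ^ 2 := by
  rw [← sub_pos, harmonicGap_succ_sub hkn hnr,
    div_pos_iff_of_pos_right (harmonicGap_succ_sub_denom_pos hkn hnr), sub_pos]

end harmonicGap

theorem A_unimodal_minimizer_general
    (r k : ℕ) (hkr : k < r)
    (A : ℕ → ℝ)
    (hA : ∀ n, A n = harmonicNum n - harmonicNum (r - n) - harmonicNum (n - k)) :
    (∀ n, k ≤ n → n + 1 ≤ r - 1 →
      (n : ℝ) < Real.sqrt ((k : ℝ) * ((r : ℝ) + 1)) - 1 → A (n + 1) < A n) ∧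
    (∀ n, k ≤ n → n + 1 ≤ r - 1 →
      (n : ℝ) > Real.sqrt ((k : ℝ) * ((r : ℝ) + 1)) - 1 → A n < A (n + 1)) ∧
    (∃ m ∈ Finset.Icc k (r - 1),
      (m = max k (min (r - 1) ⌊Real.sqrt ((k : ℝ) * ((r : ℝ) + 1)) - 1⌋₊) ∨
       m = max k (min (r - 1) ⌈Real.sqrt ((k : ℝ) * ((r : ℝ) + 1)) - 1⌉₊)) ∧
      ∀ n ∈ Finset.Icc k (r - 1), A m ≤ A n) := by
  obtain rfl : A = harmonicGap r k := funext hA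
  refine ⟨fun n hkn hnr hn => ?_, fun n hkn hnr hn => ?_, ?_⟩
  · exact (harmonicGap_succ_lt_iff hkn (by omega)).2 ((natCast_lt_sqrt_sub_one_iff n _).1 hn)
  · exact (harmonicGap_lt_succ_iff hkn (by omega)).2 ((sqrt_sub_one_lt_natCast_iff n _).1 hn)
  · refine ⟨_, Finset.mem_Icc.2 ⟨le_max_left _ _, by omega⟩, Or.inr rfl,
      apply_max_min_le_of_succ_lt_iff_lt fun j hkj hjr => ?_⟩
    rw [harmonicGap_succ_lt_iff hkj (by omega), Nat.lt_ceil, natCast_lt_sqrt_sub_one_iff]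

/-- With `A_n = H_n − H_{r−n} − H_{n−k}` for `k ≤ n ≤ r−1` and
`n* = √(k(r+1)) − 1`: `A` is strictly decreasing on integers `n < n*`, strictly
increasing on integers `n > n*`, and hence attains its minimum over `{k, …, r−1}` at
`⌊n*⌋` or `⌈n*⌉` (clamped to that range). -/
theorem A_unimodal_minimizer
    (r k : ℕ) (hk : 0 < k) (hkr : k < r)
    (A : ℕ → ℝ)
    (hA : ∀ n, A n = harmonicNum n - harmonicNum (r - n) - harmonicNum (n - k)) :
    (∀ n, k ≤ n → n + 1 ≤ r - 1 →
      (n : ℝ) < Real.sqrt ((k : ℝ) * ((r : ℝ) + 1)) - 1 → A (n + 1) < A n) ∧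
    (∀ n, k ≤ n → n + 1 ≤ r - 1 →
      (n : ℝ) > Real.sqrt ((k : ℝ) * ((r : ℝ) + 1)) - 1 → A n < A (n + 1)) ∧
    (∃ m ∈ Finset.Icc k (r - 1),
      (m = max k (min (r - 1) ⌊Real.sqrt ((k : ℝ) * ((r : ℝ) + 1)) - 1⌋₊) ∨
       m = max k (min (r - 1) ⌈Real.sqrt ((k : ℝ) * ((r : ℝ) + 1)) - 1⌉₊)) ∧
      ∀ n ∈ Finset.Icc k (r - 1), A m ≤ A n) :=
  A_unimodal_minimizer_general r k hkr A hA
end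

section
/- Suppose each chunk transmission is detected independently with probability P_d(k) = 1/(λW) + m/(kW) − e^{-λ(W−m/k)}/(λW) when W ≥ m/k (and P_d = 1 otherwise). Then for fixed n and fixed λ, m, W with W > m, the covertness probability P_c(k) = (1 − P_d(k))^{n+k} satisfies: P_d(k) is strictly decreasing in k on integers k with m/k < W. -/
open Real Set

/-!
Writing `ℓ = m / k` for the chunk length, the detection probability is
`(1 / λ + W - h (W - ℓ)) / W` with `h s = s + e^{-λ s} / λ`. Since `1 - e^{-x} < x` for `x > 0`,
`h` is strictly increasing on `[0, ∞)`, so the detection probability increases with `ℓ ≤ W`,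
while `ℓ = m / k` strictly decreases in `k` and stays below `m < W`.
-/

lemma one_sub_exp_neg_lt {x : ℝ} (hx : 0 < x) : 1 - exp (-x) < x := by
  linarith [add_one_lt_exp (neg_ne_zero.mpr hx.ne')]

lemma strictMonoOn_add_exp_neg_div {lam : ℝ} (hlam : 0 < lam) :
    StrictMonoOn (fun s => s + exp (-lam * s) / lam) (Ici 0) := by
  intro s₁ hs₁ s₂ _ hlt
  have hgap : 0 < lam * (s₂ - s₁) := mul_pos hlam (sub_pos.mpr hlt)
  have hdecay : exp (-lam * s₁) - exp (-lam * s₂) < lam * (s₂ - s₁) :=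
    calc exp (-lam * s₁) - exp (-lam * s₂)
        = exp (-lam * s₁) * (1 - exp (-(lam * (s₂ - s₁)))) := by
          rw [mul_sub, ← exp_add]; ring_nf
      _ ≤ 1 - exp (-(lam * (s₂ - s₁))) :=
          mul_le_of_le_one_left (sub_nonneg.mpr (exp_le_one_iff.mpr (by linarith)))
            (exp_le_one_iff.mpr (by nlinarith [mem_Ici.mp hs₁]))
      _ < lam * (s₂ - s₁) := one_sub_exp_neg_lt hgap
  have : exp (-lam * s₁) / lam - exp (-lam * s₂) / lam < s₂ - s₁ := by
    rw [← sub_div, div_lt_iff₀ hlam]; linarith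
  dsimp only
  linarith

noncomputable def detectionProb (lam W ℓ : ℝ) : ℝ :=
  1 / (lam * W) + ℓ / W - exp (-lam * (W - ℓ)) / (lam * W)

lemma detectionProb_eq (lam W ℓ : ℝ) :
    detectionProb lam W ℓ = (1 / lam + W - ((W - ℓ) + exp (-lam * (W - ℓ)) / lam)) / W := by
  unfold detectionProb
  simp only [← div_div]
  ring

lemma detectionProb_strictMonoOn {lam W : ℝ} (hlam : 0 < lam) (hW : 0 < W) :
    StrictMonoOn (detectionProb lam W) (Iic W) := by
  intro ℓ₁ hℓ₁ ℓ₂ hℓ₂ hlt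
  have := strictMonoOn_add_exp_neg_div hlam (mem_Ici.mpr (sub_nonneg.mpr hℓ₂)) (mem_Ici.mpr (sub_nonneg.mpr hℓ₁))
    (sub_lt_sub_left hlt W)
  rw [detectionProb_eq, detectionProb_eq]
  exact div_lt_div_of_pos_right (by linarith) hW

/-- With `P_d(k) = 1/(lam W) + m/(kW) − e^{−lam(W−m/k)}/(lam W)` and
`W > m`, the detection probability `P_d(k)` is strictly decreasing in the number of
chunks `k ≥ 1`. -/
theorem detection_probability_strict_decreasing_in_k
    (lam m W : ℝ) (hlam : 0 < lam) (hm : 0 < m) (hW : m < W) :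
    ∀ k₁ k₂ : ℕ, 1 ≤ k₁ → k₁ < k₂ →
      1 / (lam * W) + m / ((k₂ : ℝ) * W) -
          Real.exp (-lam * (W - m / (k₂ : ℝ))) / (lam * W) <
        1 / (lam * W) + m / ((k₁ : ℝ) * W) -
          Real.exp (-lam * (W - m / (k₁ : ℝ))) / (lam * W) := by
  intro k₁ k₂ hk₁ hlt
  have hk₁pos : (0 : ℝ) < k₁ := by exact_mod_cast hk₁
  have hshorter : m / k₂ < m / k₁ := div_lt_div_of_pos_left hm hk₁pos (by exact_mod_cast hlt)
  have hfits : m / k₁ ≤ W := (div_le_self hm.le (by exact_mod_cast hk₁)).trans hW.le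
  have := detectionProb_strictMonoOn hlam (hm.trans hW) (hshorter.le.trans hfits) hfits hshorter
  simpa only [detectionProb, ← div_div] using this
end
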